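/- arXiv:2210.11215 — 2 statements merged into one kernel-verified Lean document; each statement's English description precedes it below -/
import Mathlib

section
/- Let x̃_j denote the j-th column of the tail part X̃_n = X_n − X̂_n (entries X̃_ij = X_ij 1{|X_ij| > (pn)^{1/4}/‖b_i‖} − E[X_ij 1{|X_ij| > (pn)^{1/4}/‖b_i‖}]) and x̄̃ = (1/n)Σ_{j=1}^n x̃_j. Then E‖B x̄̃‖² = O(p^{1/2}/n^{3/2}) as (p,n) → ∞. -/
open Matrix MeasureTheory ProbabilityTheory Filter

/-!
The centered tail entries `X̃_lj` are independent, so the `r`-th coordinate of `B x̄̃` has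
second moment `n⁻² ∑_{l,j} B_rl² Var X̃_lj ≤ n⁻² ∑_{l,j} B_rl² E Z_lj²`, where `Z_lj` is the
uncentered tail part. Since the columns of `B` have norm `‖b_l‖ ≤ 1`, on the tail event
`(pn)^{1/4} < ‖b_l‖ |x|` we have `x² ≤ x⁴ / √(pn)`, so `E Z_lj² ≤ E ξ⁴ / √(pn)`. Summing over
the `p` rows of norm one gives `E ‖B x̄̃‖² ≤ E ξ⁴ · p / (n √(pn)) = E ξ⁴ · √p / n^{3/2}`.
-/

namespace Matrix

variable {ι κ : Type*} [Fintype κ] [DecidableEq ι] {B : Matrix ι κ ℝ}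

lemma sum_sq_row_eq_one_of_mul_transpose_eq_one (hB : B * Bᵀ = 1) (i : ι) :
    ∑ l, B i l ^ 2 = 1 := by
  simpa [mul_apply, sq] using congrFun (congrFun hB i) i

/-- `Bᵀ * B` is a symmetric idempotent, so its diagonal entries `d` satisfy `d ^ 2 ≤ d`. -/
lemma sum_sq_col_le_one_of_mul_transpose_eq_one [Fintype ι] (hB : B * Bᵀ = 1) (l : κ) :
    ∑ i, B i l ^ 2 ≤ 1 := by
  set P := Bᵀ * B
  have hP : P * P = P := by
    rw [Matrix.mul_assoc, ← Matrix.mul_assoc B, hB, Matrix.one_mul]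
  have hsymm : ∀ k, P k l = P l k := fun k => by simp [P, mul_apply, mul_comm]
  have hdiag_eq : P l l = ∑ k, P l k ^ 2 := by
    conv_lhs => rw [← hP]
    simp only [mul_apply, sq, hsymm]
  have : P l l ^ 2 ≤ P l l := hdiag_eq ▸
    Finset.single_le_sum (fun k _ => sq_nonneg (P l k)) (Finset.mem_univ l)
  have hdiag : P l l = ∑ i, B i l ^ 2 := by simp [P, mul_apply, sq]
  nlinarith

end Matrix

section Probability

variable {Ω : Type*} [MeasurableSpace Ω] {μ : Measure Ω} [IsProbabilityMeasure μ]

lemma integral_sq_sum_mul_centered_eq {κ : Type*} [Fintype κ] {Z : κ → Ω → ℝ}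
    (hZ : ∀ k, MemLp (Z k) 2 μ) (hindep : iIndepFun Z μ) (w : κ → ℝ) :
    ∫ ω, (∑ k, w k * (Z k ω - μ[Z k])) ^ 2 ∂μ = ∑ k, w k ^ 2 * Var[Z k; μ] := by
  set Y : κ → Ω → ℝ := fun k ω => w k * (Z k ω - μ[Z k])
  have hY : ∀ k, MemLp (Y k) 2 μ := fun k => ((hZ k).sub (memLp_const _)).const_mul _
  have hYindep : iIndepFun Y μ :=
    hindep.comp (fun k x => w k * (x - ∫ ω, Z k ω ∂μ)) fun k => by fun_prop
  have hmean : μ[∑ k, Y k] = 0 := by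
    simp only [Finset.sum_apply]
    rw [integral_finsetSum _ fun k _ => (hY k).integrable one_le_two]
    refine Finset.sum_eq_zero fun k _ => ?_
    rw [integral_const_mul, integral_sub ((hZ k).integrable one_le_two) (integrable_const _)]
    simp
  calc ∫ ω, (∑ k, Y k ω) ^ 2 ∂μ = Var[∑ k, Y k; μ] := by
        rw [variance_of_integral_eq_zero (memLp_finsetSum' _ fun k _ => hY k).aemeasurable hmean]
        simp
    _ = ∑ k, Var[Y k; μ] :=
        IndepFun.variance_sum (fun k _ => hY k) fun k _ l _ hkl => hYindep.indepFun hkl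
    _ = ∑ k, w k ^ 2 * Var[Z k; μ] := by
        refine Finset.sum_congr rfl fun k _ => ?_
        rw [variance_const_mul, variance_sub_const (hZ k).aestronglyMeasurable]

lemma integral_sum_sq_mulVec_centered_mean_le {ι κ : Type*} [Fintype ι] [Fintype κ]
    [DecidableEq ι] {B : Matrix ι κ ℝ} (hB : B * Bᵀ = 1) {n : ℕ} {Z : κ × Fin n → Ω → ℝ}
    (hZ : ∀ k, MemLp (Z k) 2 μ) (hindep : iIndepFun Z μ) {M : ℝ}
    (hM : ∀ k, ∫ ω, Z k ω ^ 2 ∂μ ≤ M) :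
    ∫ ω, ∑ i, (B *ᵥ fun l => (n : ℝ)⁻¹ * ∑ j, (Z (l, j) ω - μ[Z (l, j)])) i ^ 2 ∂μ
      ≤ Fintype.card ι * M / n := by
  set W : ι → Ω → ℝ := fun i ω => ∑ k, B i k.1 * (Z k ω - μ[Z k])
  have hW : ∀ i, MemLp (W i) 2 μ := fun i =>
    memLp_finsetSum _ fun k _ => ((hZ k).sub (memLp_const _)).const_mul _
  have hmulVec : ∀ ω i, (B *ᵥ fun l => (n : ℝ)⁻¹ * ∑ j, (Z (l, j) ω - μ[Z (l, j)])) i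
      = (n : ℝ)⁻¹ * W i ω := fun ω i => by
    simp only [W, mulVec, dotProduct, Fintype.sum_prod_type, Finset.mul_sum]
    exact Finset.sum_congr rfl fun l _ => Finset.sum_congr rfl fun j _ => by ring
  have hVar : ∀ k, Var[Z k; μ] ≤ M := fun k =>
    (variance_le_expectation_sq (hZ k).aestronglyMeasurable).trans (hM k)
  calc ∫ ω, ∑ i, (B *ᵥ fun l => (n : ℝ)⁻¹ * ∑ j, (Z (l, j) ω - μ[Z (l, j)])) i ^ 2 ∂μ
      = (n : ℝ)⁻¹ ^ 2 * ∑ i, ∑ k, B i k.1 ^ 2 * Var[Z k; μ] := by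
        simp only [hmulVec, mul_pow]
        rw [integral_finsetSum _ fun i _ => ((hW i).integrable_sq.const_mul _), Finset.mul_sum]
        simp only [integral_const_mul, W, integral_sq_sum_mul_centered_eq hZ hindep]
    _ ≤ (n : ℝ)⁻¹ ^ 2 * ∑ i, ∑ k : κ × Fin n, B i k.1 ^ 2 * M := by
        gcongr (n : ℝ)⁻¹ ^ 2 * ?_
        exact Finset.sum_le_sum fun i _ => Finset.sum_le_sum fun k _ =>
          mul_le_mul_of_nonneg_left (hVar k) (sq_nonneg _)
    _ = (n : ℝ)⁻¹ ^ 2 * (Fintype.card ι * (n * M)) := by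
        simp [Fintype.sum_prod_type, ← Finset.sum_mul, ← Finset.mul_sum,
          Matrix.sum_sq_row_eq_one_of_mul_transpose_eq_one hB]
    _ = Fintype.card ι * M / n := by
        rcases eq_or_ne (n : ℝ) 0 with hn | hn
        · simp [hn]
        · field_simp

end Probability

/-- The uncentered tail part of the entry `X_ij` is `tailPart ‖b_i‖ (pn)^{1/4} X_ij`. -/
noncomputable def tailPart (a c x : ℝ) : ℝ := if c < a * |x| then x else 0

lemma measurable_tailPart (a c : ℝ) : Measurable (tailPart a c) :=
  Measurable.ite (measurableSet_lt measurable_const (measurable_const.mul measurable_abs))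
    measurable_id measurable_const

/-- On the tail, `c < |x|` gives `1 ≤ x ^ 2 / c ^ 2`. -/
lemma tailPart_sq_le {a c : ℝ} (ha : a ≤ 1) (hc : 0 < c) (x : ℝ) :
    tailPart a c x ^ 2 ≤ x ^ 4 / c ^ 2 := by
  unfold tailPart
  split_ifs with h
  · have hcx : c < |x| := h.trans_le (mul_le_of_le_one_left (abs_nonneg x) ha)
    have : c ^ 2 < x ^ 2 := by rw [← sq_abs x]; exact pow_lt_pow_left₀ hcx hc.le two_ne_zero
    rw [le_div_iff₀ (by positivity)]
    nlinarith
  · rw [zero_pow two_ne_zero]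
    positivity

section TailPart

variable {Ω Ω' : Type*} [MeasurableSpace Ω] [MeasurableSpace Ω'] {μ : Measure Ω}
  {ν : Measure Ω'} {X : Ω → ℝ} {ξ : Ω' → ℝ} {a c : ℝ}

lemma memLp_two_tailPart_comp (hX : IdentDistrib X ξ μ ν)
    (h4 : Integrable (fun ω => ξ ω ^ 4) ν) (ha : a ≤ 1) (hc : 0 < c) :
    MemLp (fun ω => tailPart a c (X ω)) 2 μ := by
  have hmeas :=
    ((measurable_tailPart a c).comp_aemeasurable hX.aemeasurable_fst).aestronglyMeasurable
  have hX4 := (hX.comp (measurable_id.pow_const 4)).integrable_iff.2 h4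
  refine (memLp_two_iff_integrable_sq hmeas).2 <| (hX4.div_const (c ^ 2)).mono'
    (hmeas.pow 2) (ae_of_all _ fun ω => ?_)
  rw [Real.norm_of_nonneg (sq_nonneg _)]
  exact tailPart_sq_le ha hc _

lemma integral_sq_tailPart_comp_le (hX : IdentDistrib X ξ μ ν)
    (h4 : Integrable (fun ω => ξ ω ^ 4) ν) (ha : a ≤ 1) (hc : 0 < c) :
    ∫ ω, tailPart a c (X ω) ^ 2 ∂μ ≤ (∫ ω, ξ ω ^ 4 ∂ν) / c ^ 2 := by
  have hX4 : IdentDistrib (fun ω => X ω ^ 4) (fun ω => ξ ω ^ 4) μ ν :=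
    hX.comp (measurable_id.pow_const 4)
  rw [← hX4.integral_eq, ← integral_div]
  exact integral_mono (memLp_two_tailPart_comp hX h4 ha hc).integrable_sq
    ((hX4.integrable_iff.2 h4).div_const _) fun ω => tailPart_sq_le ha hc _

end TailPart

lemma Real.rpow_one_div_four_sq {q : ℝ} (hq : 0 ≤ q) : (q ^ ((1 : ℝ) / 4)) ^ 2 = √q := by
  rw [← Real.rpow_natCast, ← Real.rpow_mul hq, Real.sqrt_eq_rpow]
  norm_num

lemma Real.div_sqrt_mul_div_eq {p n : ℝ} (hp : 0 < p) (hn : 0 < n) :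
    p / √(p * n) / n = √p / n ^ ((3 : ℝ) / 2) := by
  have hn32 : n ^ ((3 : ℝ) / 2) = n * √n := by
    rw [show (3 : ℝ) / 2 = 1 + 1 / 2 by norm_num, Real.rpow_add hn, Real.rpow_one,
      Real.sqrt_eq_rpow]
  rw [hn32, Real.sqrt_mul hp.le, div_div, div_eq_div_iff (by positivity) (by positivity)]
  nth_rw 1 [← Real.mul_self_sqrt hp.le]
  ring

theorem tail_part_sample_mean_bound_general
    {Ω : Type*} [MeasurableSpace Ω] (μ : Measure Ω) [IsProbabilityMeasure μ]
    (ξ : Ω → ℝ)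
    (h4 : Integrable (fun ω => (ξ ω) ^ 4) μ)
    (p m : ℕ → ℕ) (hp : Tendsto p atTop atTop)
    (B : ∀ n, Matrix (Fin (p n)) (Fin (m n)) ℝ)
    (hB : ∀ n, B n * (B n)ᵀ = 1)
    (X : ∀ n, Fin (m n) × Fin n → Ω → ℝ)
    (hXindep : ∀ n, iIndepFun (X n) μ)
    (hXident : ∀ n ij, IdentDistrib (X n ij) ξ μ μ)
    -- the centered tail parts `X̃_ij`
    (Xtail : ∀ n, Fin (m n) × Fin n → Ω → ℝ)
    (hXtail : ∀ n ij ω, Xtail n ij ω =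
      Set.indicator {ω' | ((p n * n : ℝ)) ^ ((1 : ℝ) / 4) <
          Real.sqrt (∑ l, (B n l ij.1) ^ 2) * |X n ij ω'|} (X n ij) ω
        - ∫ ω', Set.indicator {ω'' | ((p n * n : ℝ)) ^ ((1 : ℝ) / 4) <
            Real.sqrt (∑ l, (B n l ij.1) ^ 2) * |X n ij ω''|} (X n ij) ω' ∂μ) :
    (fun n => ∫ ω, ∑ i, ((B n).mulVec
        (fun l => (n : ℝ)⁻¹ * ∑ j : Fin n, Xtail n (l, j) ω) i) ^ 2 ∂μ)
      =O[atTop] (fun n => Real.sqrt (p n) / (n : ℝ) ^ ((3 : ℝ) / 2)) := by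
  set C := ∫ ω, ξ ω ^ 4 ∂μ
  refine Asymptotics.isBigO_iff.2 ⟨C, ?_⟩
  filter_upwards [eventually_gt_atTop 0, hp.eventually_gt_atTop 0] with n hn hpn
  set c : ℝ := ((p n * n : ℝ)) ^ ((1 : ℝ) / 4)
  have hc : 0 < c := by positivity
  set Z : Fin (m n) × Fin n → Ω → ℝ :=
    fun k ω => tailPart (√(∑ l, B n l k.1 ^ 2)) c (X n k ω)
  have hcol : ∀ k : Fin (m n) × Fin n, √(∑ l, B n l k.1 ^ 2) ≤ 1 := fun k =>
    Real.sqrt_le_one.2 (Matrix.sum_sq_col_le_one_of_mul_transpose_eq_one (hB n) k.1)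
  have hZ : ∀ k, MemLp (Z k) 2 μ := fun k =>
    memLp_two_tailPart_comp (hXident n k) h4 (hcol k) hc
  have hZM : ∀ k, ∫ ω, Z k ω ^ 2 ∂μ ≤ C / c ^ 2 := fun k =>
    integral_sq_tailPart_comp_le (hXident n k) h4 (hcol k) hc
  have hXtail_eq : Xtail n = fun k ω => Z k ω - μ[Z k] := by
    funext k ω
    rw [hXtail]
    simp only [Set.indicator_apply]
    rfl
  rw [Real.norm_of_nonneg (integral_nonneg fun ω => by positivity),
    Real.norm_of_nonneg (by positivity), hXtail_eq]
  calc _ ≤ p n * (C / c ^ 2) / n := by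
        simpa using integral_sum_sq_mulVec_centered_mean_le (hB n) hZ
          ((hXindep n).comp _ fun k => measurable_tailPart _ _) hZM
    _ = C * (√(p n) / n ^ ((3 : ℝ) / 2)) := by
        rw [Real.rpow_one_div_four_sq (by positivity), ← Real.div_sqrt_mul_div_eq (by positivity)
          (by positivity)]
        ring

/-- Tail part of the truncation: with `X̃_ij = X_ij 1{|X_ij| > (pn)^{1/4}/‖b_i‖}
− E[X_ij 1{|X_ij| > (pn)^{1/4}/‖b_i‖}]` and `x̄̃ = (1/n) ∑_j x̃_j`, one has
`E ‖B x̄̃‖² = O(p^{1/2}/n^{3/2})` as `(p, n) → ∞`. -/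
theorem tail_part_sample_mean_bound
    {Ω : Type*} [MeasurableSpace Ω] (μ : Measure Ω) [IsProbabilityMeasure μ]
    (ξ : Ω → ℝ) (hmeas : Measurable ξ)
    (h0 : (∫ ω, ξ ω ∂μ) = 0) (h1 : (∫ ω, (ξ ω) ^ 2 ∂μ) = 1)
    (h4 : Integrable (fun ω => (ξ ω) ^ 4) μ)
    (p m : ℕ → ℕ) (hp : Tendsto p atTop atTop)
    (B : ∀ n, Matrix (Fin (p n)) (Fin (m n)) ℝ)
    (hB : ∀ n, B n * (B n)ᵀ = 1)
    (X : ∀ n, Fin (m n) × Fin n → Ω → ℝ)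
    (hXmeas : ∀ n ij, Measurable (X n ij))
    (hXindep : ∀ n, iIndepFun (X n) μ)
    (hXident : ∀ n ij, IdentDistrib (X n ij) ξ μ μ)
    -- the centered tail parts `X̃_ij`
    (Xtail : ∀ n, Fin (m n) × Fin n → Ω → ℝ)
    (hXtail : ∀ n ij ω, Xtail n ij ω =
      Set.indicator {ω' | ((p n * n : ℝ)) ^ ((1 : ℝ) / 4) <
          Real.sqrt (∑ l, (B n l ij.1) ^ 2) * |X n ij ω'|} (X n ij) ω
        - ∫ ω', Set.indicator {ω'' | ((p n * n : ℝ)) ^ ((1 : ℝ) / 4) <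
            Real.sqrt (∑ l, (B n l ij.1) ^ 2) * |X n ij ω''|} (X n ij) ω' ∂μ) :
    (fun n => ∫ ω, ∑ i, ((B n).mulVec
        (fun l => (n : ℝ)⁻¹ * ∑ j : Fin n, Xtail n (l, j) ω) i) ^ 2 ∂μ)
      =O[atTop] (fun n => Real.sqrt (p n) / (n : ℝ) ^ ((3 : ℝ) / 2)) :=
  tail_part_sample_mean_bound_general μ ξ h4 p m hp B hB X hXindep hXident Xtail hXtail
end

section
/- Under assumptions (A.1)–(A.3), ‖Bx̄‖² − c_n = O_P(√p / n) as (p,n) → ∞; that is, the sequence (n/√p)(‖Bx̄‖² − c_n) is tight. -/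
open Matrix MeasureTheory ProbabilityTheory Filter

/-! Index the sample by `a = (l, j) ∈ Fin m × Fin n`, so that `B x̄ = c Y` with
`c = n⁻¹ • B.submatrix id Prod.fst`, and `B Bᵀ = 1` gives `c cᵀ = n⁻¹ • 1`. Then
`‖B x̄‖² − p/n = Yᵀ A Y − tr A` for `A = cᵀ c`. Split this centred quadratic form into its diagonal
part `∑ A_aa (Y_a² − 1)` and its off-diagonal part `∑_{a ≠ b} A_ab Y_a Y_b`: independence makes
the summands of each part orthogonal, whence `E (Yᵀ A Y − tr A)² ≤ (2 E ξ⁴ + 4) ∑ A_ab²`, and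
`∑ A_ab² = tr (c cᵀ)² = p/n²`. Chebyshev's inequality at `t = C √p / n` bounds the probability by
`(2 E ξ⁴ + 4) / C²`. -/

theorem Finset.sum_sum_eq_sum_add_sum_offDiag {ι M : Type*} [AddCommMonoid M] [DecidableEq ι]
    (s : Finset ι) (f : ι → ι → M) :
    ∑ i ∈ s, ∑ j ∈ s, f i j = ∑ i ∈ s, f i i + ∑ q ∈ s.offDiag, f q.1 q.2 := by
  rw [← Finset.sum_product', ← Finset.diag_union_offDiag,
    Finset.sum_union (Finset.disjoint_diag_offDiag _), Finset.sum_diag]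

theorem Finset.sum_offDiag_swap {ι M : Type*} [AddCommMonoid M] [DecidableEq ι]
    (s : Finset ι) (f : ι × ι → M) :
    ∑ q ∈ s.offDiag, f q.swap = ∑ q ∈ s.offDiag, f q :=
  Finset.sum_nbij' Prod.swap Prod.swap (by simp; tauto) (by simp; tauto) (by simp)
    (by simp) (by simp)

theorem dotProduct_mulVec_sub_trace_eq_diag_add_offDiag {I : Type*} [Fintype I] [DecidableEq I]
    (A : Matrix I I ℝ) (y : I → ℝ) :
    y ⬝ᵥ A *ᵥ y - A.trace
      = ∑ a, A a a * (y a ^ 2 - 1) + ∑ q ∈ Finset.univ.offDiag, A q.1 q.2 * (y q.1 * y q.2) := by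
  have hform : y ⬝ᵥ A *ᵥ y = ∑ a, ∑ b, A a b * (y a * y b) := by
    simp only [dotProduct, mulVec, Finset.mul_sum]
    exact Finset.sum_congr rfl fun a _ => Finset.sum_congr rfl fun b _ => by ring
  rw [hform, Finset.sum_sum_eq_sum_add_sum_offDiag, Matrix.trace]
  simp only [diag, mul_sub, mul_one, Finset.sum_sub_distrib, sq]
  ring

section SecondMoments

variable {Ω : Type*} [MeasurableSpace Ω] {μ : Measure Ω}

theorem memLp_two_sq_of_integrable_pow_four {f : Ω → ℝ} (hf : AEStronglyMeasurable f μ)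
    (hf4 : Integrable (fun ω => f ω ^ 4) μ) : MemLp (fun ω => f ω ^ 2) 2 μ :=
  (memLp_two_iff_integrable_sq (f := fun ω => f ω ^ 2) (hf.pow 2)).2
    (by simpa only [← pow_mul] using hf4)

theorem memLp_two_mul_of_integrable_pow_four {f g : Ω → ℝ}
    (hf : AEStronglyMeasurable f μ) (hg : AEStronglyMeasurable g μ)
    (hf4 : Integrable (fun ω => f ω ^ 4) μ) (hg4 : Integrable (fun ω => g ω ^ 4) μ) :
    MemLp (fun ω => f ω * g ω) 2 μ := by
  refine (memLp_two_iff_integrable_sq (f := fun ω => f ω * g ω) (hf.mul hg)).2 ?_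
  simp only [mul_pow]
  exact (memLp_two_sq_of_integrable_pow_four hf hf4).integrable_mul
    (memLp_two_sq_of_integrable_pow_four hg hg4)

theorem integral_sq_sum_mul {J : Type*} (s : Finset J) (w : J → ℝ) (Z : J → Ω → ℝ)
    (hZ : ∀ j ∈ s, ∀ k ∈ s, Integrable (fun ω => Z j ω * Z k ω) μ) :
    ∫ ω, (∑ j ∈ s, w j * Z j ω) ^ 2 ∂μ
      = ∑ j ∈ s, ∑ k ∈ s, w j * w k * ∫ ω, Z j ω * Z k ω ∂μ := by
  have hexpand : ∀ ω, (∑ j ∈ s, w j * Z j ω) ^ 2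
      = ∑ j ∈ s, ∑ k ∈ s, w j * w k * (Z j ω * Z k ω) := fun ω => by
    rw [sq, Finset.sum_mul_sum]
    exact Finset.sum_congr rfl fun j _ => Finset.sum_congr rfl fun k _ => by ring
  simp_rw [hexpand]
  rw [integral_finsetSum _ fun j hj => integrable_finsetSum _ fun k hk =>
    (hZ j hj k hk).const_mul _]
  refine Finset.sum_congr rfl fun j hj => ?_
  rw [integral_finsetSum _ fun k hk => (hZ j hj k hk).const_mul _]
  simp_rw [integral_const_mul]

theorem integral_add_sq_le {f g : Ω → ℝ} (hf : MemLp f 2 μ) (hg : MemLp g 2 μ) :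
    ∫ ω, (f ω + g ω) ^ 2 ∂μ ≤ 2 * ∫ ω, f ω ^ 2 ∂μ + 2 * ∫ ω, g ω ^ 2 ∂μ := by
  rw [← integral_const_mul, ← integral_const_mul,
    ← integral_add (hf.integrable_sq.const_mul 2) (hg.integrable_sq.const_mul 2)]
  exact integral_mono (hf.add hg).integrable_sq
    ((hf.integrable_sq.const_mul 2).add (hg.integrable_sq.const_mul 2))
    fun ω => by nlinarith [sq_nonneg (f ω - g ω)]

theorem measureReal_abs_ge_le_integral_sq_div_sq {f : Ω → ℝ}
    (hf : Integrable (fun ω => f ω ^ 2) μ) {t : ℝ} (ht : 0 < t) :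
    μ.real {ω | t ≤ |f ω|} ≤ (∫ ω, f ω ^ 2 ∂μ) / t ^ 2 := by
  have hset : {ω | t ≤ |f ω|} = {ω | t ^ 2 ≤ f ω ^ 2} := by
    ext ω
    simp only [Set.mem_ofPred_eq, sq_le_sq, abs_of_pos ht]
  rw [le_div_iff₀ (by positivity), mul_comm, hset]
  exact mul_meas_ge_le_integral_of_nonneg (ae_of_all _ fun ω => sq_nonneg (f ω)) hf _

theorem integral_sq_sub_one_sq_le_integral_pow_four [IsProbabilityMeasure μ] {f : Ω → ℝ}
    (hf : Measurable f) (hf2 : ∫ ω, f ω ^ 2 ∂μ = 1) :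
    ∫ ω, (f ω ^ 2 - 1) ^ 2 ∂μ ≤ ∫ ω, f ω ^ 4 ∂μ := by
  have hvar := variance_le_expectation_sq (X := fun ω => f ω ^ 2) (μ := μ)
    (hf.pow_const 2).aestronglyMeasurable
  rw [variance_eq_integral (hf.pow_const 2).aemeasurable] at hvar
  simpa only [hf2, Pi.pow_apply, ← pow_mul] using hvar

end SecondMoments

namespace ProbabilityTheory.iIndepFun

variable {Ω : Type*} [MeasurableSpace Ω] {μ : Measure Ω} {I : Type*} {Y : I → Ω → ℝ}

theorem integral_mul_comp_eq_zero (hind : iIndepFun Y μ) (hY : ∀ a, Measurable (Y a))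
    {a : I} {T : Finset I} (ha : a ∉ T) (hY0 : ∫ ω, Y a ω ∂μ = 0)
    {g : (T → ℝ) → ℝ} (hg : Measurable g) :
    ∫ ω, Y a ω * g (fun i : T => Y i ω) ∂μ = 0 := by
  have hT : Measurable fun ω (i : T) => Y i ω := measurable_pi_lambda _ fun i => hY i
  have hindep := (hind.indepFun_finset {a} T (Finset.disjoint_singleton_left.2 ha) hY).comp
    (measurable_pi_apply ⟨a, Finset.mem_singleton_self a⟩) hg
  have hsplit := hindep.integral_fun_mul_eq_mul_integral (hY a).aestronglyMeasurable
    (hg.comp hT).aestronglyMeasurable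
  simp only [Function.comp_apply] at hsplit
  rw [hsplit, hY0, zero_mul]

theorem integral_mul_mul_mul_mul_eq_zero (hind : iIndepFun Y μ) (hY : ∀ a, Measurable (Y a))
    {a b c d : I} (hab : a ≠ b) (hac : a ≠ c) (had : a ≠ d) (hY0 : ∫ ω, Y a ω ∂μ = 0) :
    ∫ ω, Y a ω * (Y b ω * Y c ω * Y d ω) ∂μ = 0 := by
  classical
  exact hind.integral_mul_comp_eq_zero hY (T := {b, c, d}) (by simp [hab, hac, had]) hY0
    (g := fun v => v ⟨b, by simp⟩ * v ⟨c, by simp⟩ * v ⟨d, by simp⟩) (by fun_prop)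

theorem integral_sq_mul_sq_eq_one (hind : iIndepFun Y μ) (hY : ∀ a, Measurable (Y a))
    (hY2 : ∀ a, ∫ ω, Y a ω ^ 2 ∂μ = 1) {a b : I} (hab : a ≠ b) :
    ∫ ω, Y a ω ^ 2 * Y b ω ^ 2 ∂μ = 1 := by
  have hsplit := ((hind.indepFun hab).comp (measurable_id.pow_const 2)
    (measurable_id.pow_const 2)).integral_fun_mul_eq_mul_integral
    ((hY a).pow_const 2).aestronglyMeasurable ((hY b).pow_const 2).aestronglyMeasurable
  simp only [Function.comp_apply, id] at hsplit
  rw [hsplit, hY2, hY2, mul_one]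

theorem integral_sq_sub_one_mul_sq_sub_one_eq_zero [IsProbabilityMeasure μ]
    (hind : iIndepFun Y μ) (hY : ∀ a, Measurable (Y a)) (hY2 : ∀ a, ∫ ω, Y a ω ^ 2 ∂μ = 1)
    {a b : I} (hab : a ≠ b) :
    ∫ ω, (Y a ω ^ 2 - 1) * (Y b ω ^ 2 - 1) ∂μ = 0 := by
  have hsplit := ((hind.indepFun hab).comp (φ := fun x => x ^ 2 - 1) (ψ := fun x => x ^ 2 - 1)
    (by fun_prop) (by fun_prop)).integral_fun_mul_eq_mul_integral (by fun_prop) (by fun_prop)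
  have hcentered : ∫ ω, (Y a ω ^ 2 - 1) ∂μ = 0 := by
    rw [integral_sub (.of_integral_ne_zero (by simp [hY2])) (integrable_const 1), hY2]
    simp
  simp only [Function.comp_apply] at hsplit
  rw [hsplit, hcentered, zero_mul]

theorem integral_offDiag_mul_offDiag [DecidableEq I] (hind : iIndepFun Y μ)
    (hY : ∀ a, Measurable (Y a)) (hY0 : ∀ a, ∫ ω, Y a ω ∂μ = 0)
    (hY2 : ∀ a, ∫ ω, Y a ω ^ 2 ∂μ = 1) {q r : I × I} (hq : q.1 ≠ q.2) (hr : r.1 ≠ r.2) :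
    ∫ ω, Y q.1 ω * Y q.2 ω * (Y r.1 ω * Y r.2 ω) ∂μ
      = (if r = q then 1 else 0) + (if r = q.swap then 1 else 0) := by
  obtain ⟨a, b⟩ := q
  obtain ⟨c, d⟩ := r
  dsimp only at hq hr ⊢
  by_cases hpair : (c = a ∧ d = b) ∨ (c = b ∧ d = a)
  · have hsq : ∫ ω, Y a ω * Y b ω * (Y c ω * Y d ω) ∂μ = ∫ ω, Y a ω ^ 2 * Y b ω ^ 2 ∂μ := by
      refine integral_congr_ae (ae_of_all _ fun ω => ?_)
      rcases hpair with ⟨rfl, rfl⟩ | ⟨rfl, rfl⟩ <;> ring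
    rw [hsq, hind.integral_sq_mul_sq_eq_one hY hY2 hq]
    rcases hpair with ⟨rfl, rfl⟩ | ⟨rfl, rfl⟩ <;> simp [hq, hq.symm]
  · rw [if_neg (by simpa [Prod.ext_iff] using fun h h' => hpair (.inl ⟨h, h'⟩)),
      if_neg (by simpa [Prod.ext_iff] using fun h h' => hpair (.inr ⟨h, h'⟩)), add_zero]
    -- Some index occurs only once among `a, b, c, d`; it factors out with mean zero.
    by_cases ha : a = c ∨ a = d
    · have hb : b ≠ c ∧ b ≠ d := by grind
      calc ∫ ω, Y a ω * Y b ω * (Y c ω * Y d ω) ∂μ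
          = ∫ ω, Y b ω * (Y a ω * Y c ω * Y d ω) ∂μ := by congr 1; ext ω; ring
        _ = 0 := hind.integral_mul_mul_mul_mul_eq_zero hY (Ne.symm hq) hb.1 hb.2 (hY0 b)
    · obtain ⟨hac, had⟩ := not_or.1 ha
      calc ∫ ω, Y a ω * Y b ω * (Y c ω * Y d ω) ∂μ
          = ∫ ω, Y a ω * (Y b ω * Y c ω * Y d ω) ∂μ := by congr 1; ext ω; ring
        _ = 0 := hind.integral_mul_mul_mul_mul_eq_zero hY hq hac had (hY0 a)

section QuadraticForm

variable [Fintype I]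

theorem integral_sq_sum_diag_le [IsProbabilityMeasure μ]
    (hind : iIndepFun Y μ) (hY : ∀ a, Measurable (Y a)) (hY2 : ∀ a, ∫ ω, Y a ω ^ 2 ∂μ = 1)
    (hY4 : ∀ a, Integrable (fun ω => Y a ω ^ 4) μ) {K : ℝ} (hK : ∀ a, ∫ ω, Y a ω ^ 4 ∂μ ≤ K)
    (A : Matrix I I ℝ) :
    ∫ ω, (∑ a, A a a * (Y a ω ^ 2 - 1)) ^ 2 ∂μ ≤ K * ∑ a, A a a ^ 2 := by
  have hL2 : ∀ a, MemLp (fun ω => Y a ω ^ 2 - 1) 2 μ := fun a =>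
    (memLp_two_sq_of_integrable_pow_four (hY a).aestronglyMeasurable (hY4 a)).sub (memLp_const 1)
  rw [integral_sq_sum_mul _ _ _ fun a _ b _ => (hL2 a).integrable_mul (hL2 b), Finset.mul_sum]
  refine Finset.sum_le_sum fun a _ => ?_
  rw [Finset.sum_eq_single a (fun b _ hba => by
      rw [hind.integral_sq_sub_one_mul_sq_sub_one_eq_zero hY hY2 (Ne.symm hba), mul_zero])
    (by simp), mul_comm K]
  simp_rw [← sq]
  exact mul_le_mul_of_nonneg_left
    ((integral_sq_sub_one_sq_le_integral_pow_four (hY a) (hY2 a)).trans (hK a)) (sq_nonneg _)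

theorem integral_sq_sum_offDiag_le [DecidableEq I]
    (hind : iIndepFun Y μ) (hY : ∀ a, Measurable (Y a)) (hY0 : ∀ a, ∫ ω, Y a ω ∂μ = 0)
    (hY2 : ∀ a, ∫ ω, Y a ω ^ 2 ∂μ = 1) (hY4 : ∀ a, Integrable (fun ω => Y a ω ^ 4) μ)
    (A : Matrix I I ℝ) :
    ∫ ω, (∑ q ∈ Finset.univ.offDiag, A q.1 q.2 * (Y q.1 ω * Y q.2 ω)) ^ 2 ∂μ
      ≤ 2 * ∑ q ∈ Finset.univ.offDiag, A q.1 q.2 ^ 2 := by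
  have hL2 : ∀ a b, MemLp (fun ω => Y a ω * Y b ω) 2 μ := fun a b =>
    memLp_two_mul_of_integrable_pow_four (hY a).aestronglyMeasurable
      (hY b).aestronglyMeasurable (hY4 a) (hY4 b)
  have hexpand := integral_sq_sum_mul (μ := μ) Finset.univ.offDiag (fun q => A q.1 q.2)
    (fun q ω => Y q.1 ω * Y q.2 ω) fun q _ r _ => (hL2 _ _).integrable_mul (hL2 _ _)
  beta_reduce at hexpand
  have hinner : ∀ q ∈ Finset.univ.offDiag, ∑ r ∈ Finset.univ.offDiag,
      A q.1 q.2 * A r.1 r.2 * ∫ ω, Y q.1 ω * Y q.2 ω * (Y r.1 ω * Y r.2 ω) ∂μ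
        = A q.1 q.2 * (A q.1 q.2 + A q.2 q.1) := by
    intro q hq
    have hq' : q.swap ∈ Finset.univ.offDiag := by simpa [eq_comm] using hq
    rw [Finset.sum_congr rfl fun r hr => by
      rw [hind.integral_offDiag_mul_offDiag hY hY0 hY2 (Finset.mem_offDiag.1 hq).2.2
        (Finset.mem_offDiag.1 hr).2.2]]
    simp only [mul_add, mul_ite, mul_one, mul_zero, Finset.sum_add_distrib, Finset.sum_ite_eq',
      hq, hq', if_true, Prod.fst_swap, Prod.snd_swap]
  rw [hexpand, Finset.sum_congr rfl hinner]
  calc ∑ q ∈ Finset.univ.offDiag, A q.1 q.2 * (A q.1 q.2 + A q.2 q.1)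
      ≤ ∑ q ∈ Finset.univ.offDiag, (3 / 2 * A q.1 q.2 ^ 2 + 1 / 2 * A q.2 q.1 ^ 2) :=
        Finset.sum_le_sum fun q _ => by nlinarith [sq_nonneg (A q.1 q.2 - A q.2 q.1)]
    _ = 2 * ∑ q ∈ Finset.univ.offDiag, A q.1 q.2 ^ 2 := by
      have hswap := Finset.sum_offDiag_swap Finset.univ fun q : I × I => A q.1 q.2 ^ 2
      simp only [Prod.fst_swap, Prod.snd_swap] at hswap
      rw [Finset.sum_add_distrib, ← Finset.mul_sum, ← Finset.mul_sum, hswap]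
      ring

theorem measureReal_abs_dotProduct_mulVec_sub_trace_ge_le
    [IsProbabilityMeasure μ] [DecidableEq I] (hind : iIndepFun Y μ) (hY : ∀ a, Measurable (Y a))
    (hY0 : ∀ a, ∫ ω, Y a ω ∂μ = 0) (hY2 : ∀ a, ∫ ω, Y a ω ^ 2 ∂μ = 1)
    (hY4 : ∀ a, Integrable (fun ω => Y a ω ^ 4) μ) {K : ℝ} (hK : ∀ a, ∫ ω, Y a ω ^ 4 ∂μ ≤ K)
    (A : Matrix I I ℝ) {t : ℝ} (ht : 0 < t) :
    μ.real {ω | t ≤ |(fun a => Y a ω) ⬝ᵥ A *ᵥ (fun a => Y a ω) - A.trace|}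
      ≤ (2 * K + 4) * (∑ a, ∑ b, A a b ^ 2) / t ^ 2 := by
  simp_rw [dotProduct_mulVec_sub_trace_eq_diag_add_offDiag]
  have hD : MemLp (fun ω => ∑ a, A a a * (Y a ω ^ 2 - 1)) 2 μ :=
    memLp_finsetSum _ fun a _ =>
      ((memLp_two_sq_of_integrable_pow_four (hY a).aestronglyMeasurable (hY4 a)).sub
        (memLp_const 1)).const_mul _
  have hO : MemLp (fun ω => ∑ q ∈ Finset.univ.offDiag, A q.1 q.2 * (Y q.1 ω * Y q.2 ω)) 2 μ :=
    memLp_finsetSum _ fun q _ => (memLp_two_mul_of_integrable_pow_four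
      (hY q.1).aestronglyMeasurable (hY q.2).aestronglyMeasurable (hY4 q.1) (hY4 q.2)).const_mul _
  refine (measureReal_abs_ge_le_integral_sq_div_sq (hD.add hO).integrable_sq ht).trans ?_
  gcongr
  -- `0 ≤ K` is only known once an index is at hand: `I` may be empty.
  have hK0 : ∀ a : I, 0 ≤ K := fun a => (integral_nonneg fun ω => by positivity).trans (hK a)
  have hoff : 0 ≤ K * ∑ q ∈ Finset.univ.offDiag, A q.1 q.2 ^ 2 := by
    rw [Finset.mul_sum]
    exact Finset.sum_nonneg fun q _ => mul_nonneg (hK0 q.1) (sq_nonneg _)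
  have hdiag : 0 ≤ ∑ a, A a a ^ 2 := Finset.sum_nonneg fun a _ => sq_nonneg _
  calc ∫ ω, ((∑ a, A a a * (Y a ω ^ 2 - 1))
        + ∑ q ∈ Finset.univ.offDiag, A q.1 q.2 * (Y q.1 ω * Y q.2 ω)) ^ 2 ∂μ
      ≤ 2 * ∫ ω, (∑ a, A a a * (Y a ω ^ 2 - 1)) ^ 2 ∂μ
        + 2 * ∫ ω, (∑ q ∈ Finset.univ.offDiag, A q.1 q.2 * (Y q.1 ω * Y q.2 ω)) ^ 2 ∂μ :=
        integral_add_sq_le hD hO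
    _ ≤ 2 * (K * ∑ a, A a a ^ 2) + 2 * (2 * ∑ q ∈ Finset.univ.offDiag, A q.1 q.2 ^ 2) := by
      gcongr
      · exact hind.integral_sq_sum_diag_le hY hY2 hY4 hK A
      · exact hind.integral_sq_sum_offDiag_le hY hY0 hY2 hY4 A
    _ ≤ (2 * K + 4) * (∑ a, A a a ^ 2 + ∑ q ∈ Finset.univ.offDiag, A q.1 q.2 ^ 2) := by
      nlinarith
    _ = (2 * K + 4) * ∑ a, ∑ b, A a b ^ 2 := by
      rw [Finset.sum_sum_eq_sum_add_sum_offDiag Finset.univ fun a b => A a b ^ 2]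

end QuadraticForm

end ProbabilityTheory.iIndepFun

section Gram

variable {P I : Type*} [Fintype P] [Fintype I]

theorem sum_sq_mulVec (c : Matrix P I ℝ) (y : I → ℝ) :
    ∑ i, (c *ᵥ y) i ^ 2 = y ⬝ᵥ (cᵀ * c) *ᵥ y := by
  rw [← mulVec_mulVec, dotProduct_mulVec, vecMul_transpose]
  simp only [dotProduct, sq]

theorem trace_transpose_mul_of_mul_transpose_eq_smul_one [DecidableEq P] {c : Matrix P I ℝ}
    {s : ℝ} (h : c * cᵀ = s • 1) : (cᵀ * c).trace = s * Fintype.card P := by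
  rw [trace_mul_comm, h, trace_smul, trace_one, smul_eq_mul]

theorem sum_sq_transpose_mul_of_mul_transpose_eq_smul_one [DecidableEq P] {c : Matrix P I ℝ}
    {s : ℝ} (h : c * cᵀ = s • 1) : ∑ a, ∑ b, (cᵀ * c) a b ^ 2 = s ^ 2 * Fintype.card P := by
  have hfrobenius : ∑ a, ∑ b, (cᵀ * c) a b ^ 2 = (cᵀ * c * (cᵀ * c)ᵀ).trace := by
    simp only [trace, diag, mul_apply (M := cᵀ * c), transpose_apply, sq]
  rw [hfrobenius, transpose_mul, transpose_transpose, Matrix.mul_assoc, ← Matrix.mul_assoc c,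
    h, Matrix.smul_mul, Matrix.one_mul, Matrix.mul_smul, trace_smul,
    trace_transpose_mul_of_mul_transpose_eq_smul_one h, smul_eq_mul]
  ring

end Gram

section SampleMean

variable {P L J : Type*} [Fintype L] [Fintype J]

theorem mulVec_smul_sum_eq_smul_submatrix_fst_mulVec (B : Matrix P L ℝ) (s : ℝ)
    (x : L × J → ℝ) :
    B *ᵥ (fun l => s * ∑ j, x (l, j)) = (s • B.submatrix id Prod.fst) *ᵥ x := by
  ext i
  simp only [mulVec, dotProduct, Matrix.smul_apply, submatrix_apply, id, smul_eq_mul,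
    Fintype.sum_prod_type, Finset.mul_sum]
  exact Finset.sum_congr rfl fun l _ => Finset.sum_congr rfl fun j _ => by ring

theorem submatrix_fst_mul_transpose (B : Matrix P L ℝ) :
    B.submatrix id (Prod.fst : L × J → L) * (B.submatrix id (Prod.fst : L × J → L))ᵀ
      = (Fintype.card J : ℝ) • (B * Bᵀ) := by
  ext i i'
  simp only [mul_apply, submatrix_apply, id, transpose_apply, Matrix.smul_apply, smul_eq_mul,
    Fintype.sum_prod_type, Finset.sum_const, Finset.card_univ, nsmul_eq_mul, Finset.mul_sum]

end SampleMean

theorem projected_sample_mean_norm_tight_general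
    {Ω : Type*} [MeasurableSpace Ω] (μ : Measure Ω) [IsProbabilityMeasure μ]
    (ξ : Ω → ℝ)
    (h0 : (∫ ω, ξ ω ∂μ) = 0) (h1 : (∫ ω, (ξ ω) ^ 2 ∂μ) = 1)
    (h4 : Integrable (fun ω => (ξ ω) ^ 4) μ)
    (p m : ℕ → ℕ)
    (hp : Tendsto p atTop atTop)
    (B : ∀ n, Matrix (Fin (p n)) (Fin (m n)) ℝ)
    (hB : ∀ n, B n * (B n)ᵀ = 1)
    (X : ∀ n, Fin (m n) × Fin n → Ω → ℝ)
    (hXmeas : ∀ n ij, Measurable (X n ij))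
    (hXindep : ∀ n, iIndepFun (X n) μ)
    (hXident : ∀ n ij, IdentDistrib (X n ij) ξ μ μ) :
    ∀ ε > (0 : ℝ), ∃ C > (0 : ℝ), ∀ᶠ n in atTop,
      (μ {ω | C * (Real.sqrt (p n) / n) ≤
          |(∑ i, ((B n).mulVec
              (fun l => (n : ℝ)⁻¹ * ∑ j : Fin n, X n (l, j) ω) i) ^ 2)
            - (p n : ℝ) / n|}).toReal ≤ ε := by
  intro ε hε
  set K := ∫ ω, ξ ω ^ 4 ∂μ
  have hK : 0 ≤ K := integral_nonneg fun ω => by positivity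
  refine ⟨Real.sqrt ((2 * K + 4) / ε), by positivity, ?_⟩
  filter_upwards [hp.eventually_ge_atTop 1, eventually_ge_atTop 1] with n hpn hn
  have hmoment : ∀ a k, ∫ ω, X n a ω ^ k ∂μ = ∫ ω, ξ ω ^ k ∂μ := fun a k =>
    ((hXident n a).comp (measurable_id.pow_const k)).integral_eq
  set c := (n : ℝ)⁻¹ • (B n).submatrix id (Prod.fst : Fin (m n) × Fin n → Fin (m n))
  have hc : c * cᵀ = (n : ℝ)⁻¹ • 1 := by
    rw [transpose_smul, Matrix.smul_mul, Matrix.mul_smul, submatrix_fst_mul_transpose, hB,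
      smul_smul, smul_smul, Fintype.card_fin]
    field_simp
  have hstat : ∀ ω, ∑ i, (B n *ᵥ fun l => (n : ℝ)⁻¹ * ∑ j : Fin n, X n (l, j) ω) i ^ 2
      - (p n : ℝ) / n = (fun a => X n a ω) ⬝ᵥ (cᵀ * c) *ᵥ (fun a => X n a ω) - (cᵀ * c).trace := by
    intro ω
    rw [mulVec_smul_sum_eq_smul_submatrix_fst_mulVec (B n) _ fun a => X n a ω, sum_sq_mulVec,
      trace_transpose_mul_of_mul_transpose_eq_smul_one hc, Fintype.card_fin, inv_mul_eq_div]
  simp_rw [hstat, ← measureReal_def]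
  refine ((hXindep n).measureReal_abs_dotProduct_mulVec_sub_trace_ge_le (hXmeas n)
    (fun a => by simpa [h0] using hmoment a 1) (fun a => (hmoment a 2).trans h1)
    (fun a => ((hXident n a).comp (measurable_id.pow_const 4)).integrable_iff.2 h4)
    (K := K) (fun a => (hmoment a 4).le) (cᵀ * c) (by positivity)).trans_eq ?_
  rw [sum_sq_transpose_mul_of_mul_transpose_eq_smul_one hc, Fintype.card_fin, mul_pow,
    div_pow, Real.sq_sqrt (by positivity), Real.sq_sqrt (by positivity)]
  field_simp

/-- Under (A.1)–(A.3), `‖Bx̄‖² − c_n = O_P(√p/n)`: the sequence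
`(n/√p)(‖Bx̄‖² − c_n)` is tight. -/
theorem projected_sample_mean_norm_tight
    {Ω : Type*} [MeasurableSpace Ω] (μ : Measure Ω) [IsProbabilityMeasure μ]
    (ξ : Ω → ℝ) (hmeas : Measurable ξ)
    (h0 : (∫ ω, ξ ω ∂μ) = 0) (h1 : (∫ ω, (ξ ω) ^ 2 ∂μ) = 1)
    (h4 : Integrable (fun ω => (ξ ω) ^ 4) μ)
    (p m : ℕ → ℕ) (η : ℝ) (hη0 : 0 < η) (hη1 : η < 1)
    (hc : (fun n => (p n : ℝ) / n) =O[atTop] (fun n => (n : ℝ) ^ (-η)))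
    (hp : Tendsto p atTop atTop)
    (B : ∀ n, Matrix (Fin (p n)) (Fin (m n)) ℝ)
    (hB : ∀ n, B n * (B n)ᵀ = 1)
    (X : ∀ n, Fin (m n) × Fin n → Ω → ℝ)
    (hXmeas : ∀ n ij, Measurable (X n ij))
    (hXindep : ∀ n, iIndepFun (X n) μ)
    (hXident : ∀ n ij, IdentDistrib (X n ij) ξ μ μ) :
    ∀ ε > (0 : ℝ), ∃ C > (0 : ℝ), ∀ᶠ n in atTop,
      (μ {ω | C * (Real.sqrt (p n) / n) ≤
          |(∑ i, ((B n).mulVec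
              (fun l => (n : ℝ)⁻¹ * ∑ j : Fin n, X n (l, j) ω) i) ^ 2)
            - (p n : ℝ) / n|}).toReal ≤ ε :=
  projected_sample_mean_norm_tight_general μ ξ h0 h1 h4 p m hp B hB X hXmeas hXindep hXident
end
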